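/- arXiv:1201.4141 — 2 statements merged into one kernel-verified Lean document; each statement's English description precedes it below -/
import Mathlib

section
/- Let ν = ν* + iν̃ be a complex eigenvector of B = Aᵀ with eigenvalue λ = λ* + iλ̃ where λ̃ ≠ 0. Then F(x) = ((ν*·x)² + (ν̃·x)²) · exp(−(2λ*/λ̃) · arctan((ν̃·x)/(ν*·x))) is an autonomous first integral of dx/dt = Ax on any open set where ν*·x ≠ 0. -/
/-!
Write `u = ν*·x` and `w = ν̃·x`. Since `ν` is an eigenvector of `Aᵀ`, along `x' = Ax` these
evolve by `u' = λ*u − λ̃w`, `w' = λ*w + λ̃u`: in polar coordinates `r² = u² + w²` satisfies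
`(r²)' = 2λ* r²` while the angle `θ = arctan (w/u)` satisfies `θ' = λ̃`. Hence
`F = r² · exp (−(2λ*/λ̃) θ)` has zero derivative along the flow.
-/

open Matrix Real

section PolarAngle

variable {E : Type*} [NormedAddCommGroup E] [NormedSpace ℝ E] {p q : E → ℝ}
  {p' q' : E →L[ℝ] ℝ} {x : E}

theorem hasFDerivAt_arctan_div (hp : HasFDerivAt p p' x) (hq : HasFDerivAt q q' x)
    (hx : p x ≠ 0) :
    HasFDerivAt (fun y => arctan (q y / p y))
      ((p x ^ 2 + q x ^ 2)⁻¹ • (p x • q' - q x • p')) x := by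
  have hdiv := hq.fun_mul ((hasDerivAt_inv hx).comp_hasFDerivAt x hp)
  simp only [Function.comp_apply, ← div_eq_mul_inv] at hdiv
  refine hdiv.arctan.congr_fderiv ?_
  ext v
  simp only [_root_.add_apply, _root_.smul_apply, _root_.sub_apply, smul_eq_mul]
  field_simp
  ring

theorem hasFDerivAt_sq_add_sq_mul_exp_arctan (hp : HasFDerivAt p p' x)
    (hq : HasFDerivAt q q' x) (hx : p x ≠ 0) (c : ℝ) :
    HasFDerivAt (fun y => (p y ^ 2 + q y ^ 2) * exp (-c * arctan (q y / p y)))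
      (exp (-c * arctan (q x / p x)) •
        ((2 * p x + c * q x) • p' + (2 * q x - c * p x) • q')) x := by
  refine ((hp.pow 2).fun_add (hq.pow 2)).fun_mul
    (((hasFDerivAt_arctan_div hp hq hx).const_mul (-c)).exp) |>.congr_fderiv ?_
  ext v
  simp only [_root_.add_apply, _root_.smul_apply, _root_.sub_apply, smul_eq_mul]
  have hr : p x ^ 2 + q x ^ 2 ≠ 0 := by positivity
  field_simp
  ring

theorem fderiv_sq_add_sq_mul_exp_arctan_eq_zero (hp : HasFDerivAt p p' x)
    (hq : HasFDerivAt q q' x) (hx : p x ≠ 0) {a b : ℝ} (hb : b ≠ 0) {v : E}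
    (hpv : p' v = a * p x - b * q x) (hqv : q' v = a * q x + b * p x) :
    fderiv ℝ (fun y => (p y ^ 2 + q y ^ 2) * exp (-(2 * a / b) * arctan (q y / p y))) x v
      = 0 := by
  rw [(hasFDerivAt_sq_add_sq_mul_exp_arctan hp hq hx _).fderiv]
  simp only [_root_.add_apply, _root_.smul_apply, smul_eq_mul, hpv, hqv]
  field_simp
  ring

end PolarAngle

theorem hasFDerivAt_dotProduct {ι : Type*} [Fintype ι] (v x : ι → ℝ) :
    HasFDerivAt (v ⬝ᵥ ·) (dotProductBilin ℝ ℝ v).toContinuousLinearMap x :=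
  (dotProductBilin ℝ ℝ v).toContinuousLinearMap.hasFDerivAt

theorem vecMul_eq_of_map_ofReal_transpose_mulVec_eq {ι : Type*} [Fintype ι]
    {A : Matrix ι ι ℝ} {νs νt : ι → ℝ} {a b : ℝ}
    (h : (A.map Complex.ofReal)ᵀ *ᵥ (fun i => (νs i : ℂ) + νt i * Complex.I)
      = ((a : ℂ) + b * Complex.I) • (fun i => (νs i : ℂ) + νt i * Complex.I)) :
    νs ᵥ* A = a • νs - b • νt ∧ νt ᵥ* A = a • νt + b • νs := by
  simp only [funext_iff, mulVec, dotProduct, Complex.ext_iff] at h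
  constructor <;> ext i
  · simpa [vecMul, dotProduct, mul_comm] using (h i).1
  · simpa [vecMul, dotProduct, mul_comm, add_comm] using (h i).2

theorem first_integral_complex_eigenvector_general
    (n : ℕ) (A : Matrix (Fin n) (Fin n) ℝ)
    (νs νt : Fin n → ℝ) (lams lamt : ℝ) (hlamt : lamt ≠ 0)
    (heig : (A.map Complex.ofReal)ᵀ.mulVec (fun i => (νs i : ℂ) + νt i * Complex.I)
      = ((lams : ℂ) + lamt * Complex.I) • (fun i => (νs i : ℂ) + νt i * Complex.I)) :
    ∀ x : Fin n → ℝ, νs ⬝ᵥ x ≠ 0 →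
      fderiv ℝ (fun y => ((νs ⬝ᵥ y) ^ 2 + (νt ⬝ᵥ y) ^ 2)
          * Real.exp (-(2 * lams / lamt) * Real.arctan ((νt ⬝ᵥ y) / (νs ⬝ᵥ y))))
        x (A.mulVec x) = 0 := by
  intro x hx
  obtain ⟨hs, ht⟩ := vecMul_eq_of_map_ofReal_transpose_mulVec_eq heig
  refine fderiv_sq_add_sq_mul_exp_arctan_eq_zero (hasFDerivAt_dotProduct νs x)
    (hasFDerivAt_dotProduct νt x) hx hlamt ?_ ?_
  · simp [dotProduct_mulVec, hs, sub_dotProduct, smul_dotProduct]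
  · simp [dotProduct_mulVec, ht, add_dotProduct, smul_dotProduct]

/-- Theorem 1.2: if `ν = ν* + iν̃` is a complex eigenvector of `B = Aᵀ` with
eigenvalue `λ = λ* + iλ̃`, `λ̃ ≠ 0`, then
`F(x) = ((ν*·x)² + (ν̃·x)²)·exp(−(2λ*/λ̃)·arctan((ν̃·x)/(ν*·x)))`
is an autonomous first integral of `dx/dt = Ax` wherever `ν*·x ≠ 0`. -/
theorem first_integral_complex_eigenvector
    (n : ℕ) (A : Matrix (Fin n) (Fin n) ℝ)
    (νs νt : Fin n → ℝ) (lams lamt : ℝ) (hlamt : lamt ≠ 0)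
    (hν : (fun i => (νs i : ℂ) + νt i * Complex.I) ≠ (0 : Fin n → ℂ))
    (heig : (A.map Complex.ofReal)ᵀ.mulVec (fun i => (νs i : ℂ) + νt i * Complex.I)
      = ((lams : ℂ) + lamt * Complex.I) • (fun i => (νs i : ℂ) + νt i * Complex.I)) :
    ∀ x : Fin n → ℝ, νs ⬝ᵥ x ≠ 0 →
      fderiv ℝ (fun y => ((νs ⬝ᵥ y) ^ 2 + (νt ⬝ᵥ y) ^ 2)
          * Real.exp (-(2 * lams / lamt) * Real.arctan ((νt ⬝ᵥ y) / (νs ⬝ᵥ y))))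
        x (A.mulVec x) = 0 :=
  first_integral_complex_eigenvector_general n A νs νt lams lamt hlamt heig
end

section
/- Let A: J → M_n(ℝ) be continuous on an interval J, let f: J → ℝⁿ be continuous, and suppose ν ∈ ℝⁿ and λ: J → ℝ continuous satisfy A(t)ᵀ ν = λ(t) ν for all t ∈ J. Fix t₀ ∈ J and set φ(t) = exp(−∫_{t₀}^t λ(ζ)dζ). Then F(t,x) = (ν·x)·φ(t) − ∫_{t₀}^t (ν·f(ζ))·φ(ζ) dζ is a first integral of the system dx/dt = A(t)x + f(t), i.e. ∂ₜF(t,x) + (∇ₓF(t,x))·(A(t)x + f(t)) = 0 for all (t,x) ∈ J × ℝⁿ. -/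
/-!
Write `Λ(t) = ∫_{t₀}^t λ` and `φ = exp (-Λ)`. Along `∂ₜ`, the first term of `F` contributes
`-λ φ (ν·x)` and the integral contributes `-(ν·f) φ`; along the vector field, `∇ₓF = φ ν` gives
`φ ν·(A x + f) = φ (λ (ν·x) + ν·f)`, because `ν·(A x) = (Aᵀν)·x = λ (ν·x)`. The two cancel.
-/

open Matrix

section Primitive

variable {E : Type*} [NormedAddCommGroup E] [NormedSpace ℝ E] [CompleteSpace E]
  {J : Set ℝ} {g : ℝ → E} {t₀ : ℝ}

theorem ContinuousOn.hasDerivAt_integral_of_isOpen_of_ordConnected (hg : ContinuousOn g J)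
    (hJo : IsOpen J) (hJc : J.OrdConnected) (ht₀ : t₀ ∈ J) {t : ℝ} (ht : t ∈ J) :
    HasDerivAt (fun s => ∫ ζ in t₀..s, g ζ) (g t) t :=
  intervalIntegral.integral_hasDerivAt_right
    ((hg.mono (hJc.uIcc_subset ht₀ ht)).intervalIntegrable)
    (hg.stronglyMeasurableAtFilter hJo t ht)
    ((hg t ht).continuousAt (hJo.mem_nhds ht))

theorem ContinuousOn.continuousOn_integral_of_isOpen_of_ordConnected (hg : ContinuousOn g J)
    (hJo : IsOpen J) (hJc : J.OrdConnected) (ht₀ : t₀ ∈ J) :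
    ContinuousOn (fun s => ∫ ζ in t₀..s, g ζ) J := fun _ ht =>
  (hg.hasDerivAt_integral_of_isOpen_of_ordConnected hJo hJc ht₀ ht).continuousAt.continuousWithinAt

end Primitive

theorem Matrix.fderiv_dotProduct_mul_const_sub_const_apply {𝕜 ι : Type*}
    [NontriviallyNormedField 𝕜] [Fintype ι] (ν : ι → 𝕜) (c K : 𝕜) (x v : ι → 𝕜) :
    fderiv 𝕜 (fun y => (ν ⬝ᵥ y) * c - K) x v = c * (ν ⬝ᵥ v) := by
  set L : (ι → 𝕜) →L[𝕜] 𝕜 := ∑ i, ν i • ContinuousLinearMap.proj i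
  have hL : ∀ y, L y = ν ⬝ᵥ y := fun y => by simp [L, dotProduct]
  have hdot : HasFDerivAt (fun y => ν ⬝ᵥ y) L x := funext hL ▸ L.hasFDerivAt
  rw [((hdot.mul_const c).sub_const K).fderiv]
  simp [hL]

theorem Matrix.dotProduct_mulVec_of_transpose_mulVec_eq_smul {R ι : Type*} [CommSemiring R]
    [Fintype ι] {A : Matrix ι ι R} {ν : ι → R} {μ : R} (h : Aᵀ *ᵥ ν = μ • ν) (x : ι → R) :
    ν ⬝ᵥ A *ᵥ x = μ * (ν ⬝ᵥ x) := by
  rw [dotProduct_mulVec, ← mulVec_transpose, h, smul_dotProduct, smul_eq_mul]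

theorem first_integral_algebraic_reducible_general
    (n : ℕ) (J : Set ℝ) (hJo : IsOpen J) (hJc : J.OrdConnected)
    (A : ℝ → Matrix (Fin n) (Fin n) ℝ) (f : ℝ → Fin n → ℝ) (lam : ℝ → ℝ)
    (hf : ContinuousOn f J) (hlam : ContinuousOn lam J)
    (ν : Fin n → ℝ)
    (heig : ∀ t ∈ J, (A t)ᵀ.mulVec ν = lam t • ν)
    (t₀ : ℝ) (ht₀ : t₀ ∈ J) :
    ∀ t ∈ J, ∀ x : Fin n → ℝ,
      deriv (fun s => (ν ⬝ᵥ x) * Real.exp (-∫ ζ in t₀..s, lam ζ)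
          - ∫ ζ in t₀..s, (ν ⬝ᵥ f ζ) * Real.exp (-∫ θ in t₀..ζ, lam θ)) t
        + fderiv ℝ (fun y => (ν ⬝ᵥ y) * Real.exp (-∫ ζ in t₀..t, lam ζ)
            - ∫ ζ in t₀..t, (ν ⬝ᵥ f ζ) * Real.exp (-∫ θ in t₀..ζ, lam θ)) x
            ((A t).mulVec x + f t) = 0 := by
  intro t ht x
  set Λ : ℝ → ℝ := fun s => ∫ ζ in t₀..s, lam ζ
  have hforcing : ContinuousOn (fun ζ => (ν ⬝ᵥ f ζ) * Real.exp (-Λ ζ)) J :=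
    ((continuous_const.dotProduct continuous_id).comp_continuousOn hf).mul
      (Real.continuous_exp.comp_continuousOn
        (hlam.continuousOn_integral_of_isOpen_of_ordConnected hJo hJc ht₀).neg)
  have htime : deriv (fun s => (ν ⬝ᵥ x) * Real.exp (-Λ s)
        - ∫ ζ in t₀..s, (ν ⬝ᵥ f ζ) * Real.exp (-Λ ζ)) t
      = (ν ⬝ᵥ x) * (Real.exp (-Λ t) * -lam t) - (ν ⬝ᵥ f t) * Real.exp (-Λ t) :=
    ((((hlam.hasDerivAt_integral_of_isOpen_of_ordConnected hJo hJc ht₀ ht).neg.exp).const_mul _).sub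
      (hforcing.hasDerivAt_integral_of_isOpen_of_ordConnected hJo hJc ht₀ ht)).deriv
  rw [htime, fderiv_dotProduct_mul_const_sub_const_apply, dotProduct_add,
    dotProduct_mulVec_of_transpose_mulVec_eq_smul (heig t ht)]
  ring

/-- Theorem 2.1: for the algebraic reducible system `dx/dt = A(t)x + f(t)` on an
interval `J`, with `ν` a constant real eigenvector of `A(t)ᵀ` with eigenfunction
`λ(t)`, the function
`F(t,x) = (ν·x)·φ(t) − ∫_{t₀}^t (ν·f(ζ))·φ(ζ)dζ`, `φ(t) = exp(−∫_{t₀}^t λ)`,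
is a first integral: `∂ₜF + (∇ₓF)·(A(t)x + f(t)) = 0` on `J × ℝⁿ`. -/
theorem first_integral_algebraic_reducible
    (n : ℕ) (J : Set ℝ) (hJo : IsOpen J) (hJc : J.OrdConnected)
    (A : ℝ → Matrix (Fin n) (Fin n) ℝ) (f : ℝ → Fin n → ℝ) (lam : ℝ → ℝ)
    (hA : ContinuousOn A J) (hf : ContinuousOn f J) (hlam : ContinuousOn lam J)
    (ν : Fin n → ℝ) (hν : ν ≠ 0)
    (heig : ∀ t ∈ J, (A t)ᵀ.mulVec ν = lam t • ν)
    (t₀ : ℝ) (ht₀ : t₀ ∈ J) :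
    ∀ t ∈ J, ∀ x : Fin n → ℝ,
      deriv (fun s => (ν ⬝ᵥ x) * Real.exp (-∫ ζ in t₀..s, lam ζ)
          - ∫ ζ in t₀..s, (ν ⬝ᵥ f ζ) * Real.exp (-∫ θ in t₀..ζ, lam θ)) t
        + fderiv ℝ (fun y => (ν ⬝ᵥ y) * Real.exp (-∫ ζ in t₀..t, lam ζ)
            - ∫ ζ in t₀..t, (ν ⬝ᵥ f ζ) * Real.exp (-∫ θ in t₀..ζ, lam θ)) x
            ((A t).mulVec x + f t) = 0 :=
  first_integral_algebraic_reducible_general n J hJo hJc A f lam hf hlam ν heig t₀ ht₀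
end
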